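/- Let X be a measurable space, let D be a probability measure on X × {−1, 1}, let γ ∈ (0, 1], η > 0, and T a positive integer. Let h_1, …, h_T : X → ℝ be measurable functions with |h_t(x)| ≤ 1/γ for all t and x, and define H_1 = 0 and H_{t+1} = H_t + η·h_t for t = 1, …, T. Then −(1/T)·Σ_{t=1}^T E_{(x,y)∼D}[φ′(y·H_t(x))·y·h_t(x)] ≤ 2/(η·T) + η/(2γ²). -/

import Mathlib

/-!
Since φ'' is `0` on `z ≤ 0` and `z e^{-z} ∈ [0, 1]` on `z > 0`, φ' is 1-Lipschitz, whence the
quadratic upper bound `φ(a + b) ≤ φ(a) + φ'(a) b + b² / 2`. Taking `a = y H_t(x)`, `b = η y h_t(x)`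
with `y² = 1`, `|h_t| ≤ 1/γ`, and integrating gives the one-step descent
`Φ_D(H_{t+1}) ≤ Φ_D(H_t) + η Φ'_D(H_t, h_t) + η² / (2γ²)`. Summing over `t` telescopes, and
`Φ_D(H_1) = 2`, `Φ_D(H_{T+1}) ≥ 0` bound `-η Σ_t Φ'_D(H_t, h_t)` by `2 + T η² / (2γ²)`.
-/

open MeasureTheory

/-- The potential function φ(z) = 2 − z for z ≤ 0 and φ(z) = (z + 2)·exp(−z) for z > 0. -/
noncomputable def phi (z : ℝ) : ℝ := if z ≤ 0 then 2 - z else (z + 2) * Real.exp (-z)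

/-- The derivative of the potential function: φ′(z) = −1 for z ≤ 0 and
φ′(z) = −(z + 1)·exp(−z) for z > 0. -/
noncomputable def phi' (z : ℝ) : ℝ := if z ≤ 0 then -1 else -(z + 1) * Real.exp (-z)

open Set

theorem hasDerivAt_ite_le {f g f' g' : ℝ → ℝ} {c : ℝ} (hf : ∀ x, HasDerivAt f (f' x) x)
    (hg : ∀ x, HasDerivAt g (g' x) x) (hfg : f c = g c) (hfg' : f' c = g' c) (x : ℝ) :
    HasDerivAt (fun x => if x ≤ c then f x else g x) (if x ≤ c then f' x else g' x) x := by
  rcases lt_trichotomy x c with hx | rfl | hx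
  · rw [if_pos hx.le]
    refine (hf x).congr_of_eventuallyEq ?_
    filter_upwards [Iio_mem_nhds hx] with y hy
    rw [if_pos (le_of_lt hy)]
  · rw [if_pos le_rfl]
    have hleft : HasDerivWithinAt (fun y => if y ≤ x then f y else g y) (f' x) (Iic x) x :=
      (hf x).hasDerivWithinAt.congr (fun y hy => if_pos hy) (if_pos le_rfl)
    have hright : HasDerivWithinAt (fun y => if y ≤ x then f y else g y) (f' x) (Ici x) x := by
      refine (hfg' ▸ hg x).hasDerivWithinAt.congr (fun y hy => ?_) (by rw [if_pos le_rfl, hfg])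
      split_ifs with hyx
      · rw [le_antisymm hyx hy, hfg]
      · rfl
    simpa only [Iic_union_Ici, hasDerivWithinAt_univ] using hleft.union hright
  · rw [if_neg hx.not_ge]
    refine (hg x).congr_of_eventuallyEq ?_
    filter_upwards [Ioi_mem_nhds hx] with y hy
    rw [if_neg (not_le.2 hy)]

theorem hasDerivAt_mul_exp_neg {p : ℝ → ℝ} {p' x : ℝ} (hp : HasDerivAt p p' x) :
    HasDerivAt (fun x => p x * Real.exp (-x)) ((p' - p x) * Real.exp (-x)) x :=
  (hp.mul (hasDerivAt_neg x).exp).congr_deriv (by ring)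

theorem add_one_mul_exp_neg_le_one (z : ℝ) : (z + 1) * Real.exp (-z) ≤ 1 := by
  rw [Real.exp_neg, ← div_eq_mul_inv, div_le_one (Real.exp_pos z)]
  exact Real.add_one_le_exp z

theorem le_add_mul_add_sq_of_lipschitzWith {f f' : ℝ → ℝ} {K : NNReal}
    (hf : ∀ x, HasDerivAt f (f' x) x) (hf' : LipschitzWith K f') (a b : ℝ) :
    f (a + b) ≤ f a + f' a * b + K / 2 * b ^ 2 := by
  set g : ℝ → ℝ := fun t => f (a + t * b) - t * (f' a * b) - K / 2 * t ^ 2 * b ^ 2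
  have hg : ∀ t, HasDerivAt g ((f' (a + t * b) - f' a) * b - K * t * b ^ 2) t := by
    intro t
    have hline : HasDerivAt (fun t => a + t * b) b t := by
      simpa using ((hasDerivAt_id t).mul_const b).const_add a
    have := (((hf _).comp t hline).sub ((hasDerivAt_id t).mul_const (f' a * b))).sub
      (((hasDerivAt_pow 2 t).const_mul (K / 2 : ℝ)).mul_const (b ^ 2))
    exact this.congr_deriv (by push_cast; ring)
  have hanti : AntitoneOn g (Ici 0) := by
    refine antitoneOn_of_deriv_nonpos (convex_Ici 0)
      (fun t _ => (hg t).continuousAt.continuousWithinAt)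
      (fun t _ => (hg t).differentiableAt.differentiableWithinAt) fun t ht => ?_
    rw [interior_Ici] at ht
    have hlip : |f' (a + t * b) - f' a| ≤ K * (t * |b|) := by
      simpa [Real.dist_eq, abs_mul, abs_of_pos ht.out] using hf'.dist_le_mul (a + t * b) a
    rw [(hg t).deriv, sub_nonpos]
    calc (f' (a + t * b) - f' a) * b ≤ |f' (a + t * b) - f' a| * |b| := by
          rw [← abs_mul]; exact le_abs_self _
      _ ≤ K * (t * |b|) * |b| := by gcongr
      _ = K * t * b ^ 2 := by rw [← sq_abs b]; ring
  have := hanti self_mem_Ici (zero_le_one : (0 : ℝ) ≤ 1) zero_le_one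
  simp only [g, one_mul, zero_mul, add_zero] at this
  linarith

theorem phi_nonneg (z : ℝ) : 0 ≤ phi z := by
  unfold phi
  split_ifs with hz
  · linarith
  · have : 0 < z := not_le.1 hz
    positivity

theorem abs_phi'_le_one (z : ℝ) : |phi' z| ≤ 1 := by
  unfold phi'
  split_ifs with hz
  · simp
  · have hz : 0 < z := not_le.1 hz
    rw [neg_mul, abs_neg, abs_of_pos (by positivity)]
    exact add_one_mul_exp_neg_le_one z

@[fun_prop]
theorem measurable_phi : Measurable phi :=
  Measurable.ite measurableSet_Iic (by fun_prop) (by fun_prop)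

@[fun_prop]
theorem measurable_phi' : Measurable phi' :=
  Measurable.ite measurableSet_Iic (by fun_prop) (by fun_prop)

noncomputable def phi'' (z : ℝ) : ℝ := if z ≤ 0 then 0 else z * Real.exp (-z)

theorem hasDerivAt_phi (z : ℝ) : HasDerivAt phi (phi' z) z := by
  refine hasDerivAt_ite_le (f' := fun _ => -1) (g' := fun x => -(x + 1) * Real.exp (-x))
    (fun x => ?_) (fun x => ?_) (by simp) (by simp) z
  · simpa using (hasDerivAt_id x).const_sub 2
  · exact (hasDerivAt_mul_exp_neg ((hasDerivAt_id x).add_const 2)).congr_deriv (by rw [id]; ring)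

theorem hasDerivAt_phi' (z : ℝ) : HasDerivAt phi' (phi'' z) z := by
  refine hasDerivAt_ite_le (f' := fun _ => 0) (g' := fun x => x * Real.exp (-x))
    (hasDerivAt_const · (-1)) (fun x => ?_) (by simp) (by simp) z
  exact (hasDerivAt_mul_exp_neg ((hasDerivAt_id x).add_const 1).neg).congr_deriv (by simp)

theorem abs_phi''_le_one (z : ℝ) : |phi'' z| ≤ 1 := by
  unfold phi''
  split_ifs with hz
  · simp
  · have hz : 0 < z := not_le.1 hz
    rw [abs_of_pos (by positivity)]
    linarith [add_one_mul_exp_neg_le_one z, Real.exp_pos (-z)]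

theorem lipschitzWith_phi' : LipschitzWith 1 phi' :=
  lipschitzWith_of_nnnorm_deriv_le (fun z => (hasDerivAt_phi' z).differentiableAt) fun z => by
    rw [(hasDerivAt_phi' z).deriv, ← NNReal.coe_le_coe, coe_nnnorm]
    exact abs_phi''_le_one z

theorem phi_add_le (a b : ℝ) : phi (a + b) ≤ phi a + phi' a * b + b ^ 2 / 2 := by
  simpa [div_eq_inv_mul] using
    le_add_mul_add_sq_of_lipschitzWith hasDerivAt_phi lipschitzWith_phi' a b

theorem phi_mul_add_le {y a b B : ℝ} (η : ℝ) (hy : y = 1 ∨ y = -1) (hb : |b| ≤ B) :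
    phi (y * (a + η * b)) ≤ phi (y * a) + η * (phi' (y * a) * y * b) + η ^ 2 * B ^ 2 / 2 := by
  have hy2 : y ^ 2 = 1 := by rcases hy with rfl | rfl <;> norm_num
  have hb2 : b ^ 2 ≤ B ^ 2 := by
    simpa only [sq_abs] using pow_le_pow_left₀ (abs_nonneg b) hb 2
  calc phi (y * (a + η * b)) = phi (y * a + η * (y * b)) := by ring_nf
    _ ≤ phi (y * a) + phi' (y * a) * (η * (y * b)) + (η * (y * b)) ^ 2 / 2 := phi_add_le _ _
    _ = phi (y * a) + η * (phi' (y * a) * y * b) + η ^ 2 * b ^ 2 / 2 := by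
      linear_combination η ^ 2 * b ^ 2 / 2 * hy2
    _ ≤ phi (y * a) + η * (phi' (y * a) * y * b) + η ^ 2 * B ^ 2 / 2 := by gcongr

section Potential

variable {X : Type*} [MeasurableSpace X]

-- `potential D H` is `Φ_D(H)` and `potentialDeriv D H h` is `Φ′_D(H, h)`.
noncomputable def potential (D : Measure (X × ℝ)) (H : X → ℝ) : ℝ :=
  ∫ p, phi (p.2 * H p.1) ∂D

noncomputable def potentialDeriv (D : Measure (X × ℝ)) (H h : X → ℝ) : ℝ :=
  ∫ p, phi' (p.2 * H p.1) * p.2 * h p.1 ∂D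

theorem potential_nonneg (D : Measure (X × ℝ)) (H : X → ℝ) : 0 ≤ potential D H :=
  integral_nonneg fun _ => phi_nonneg _

variable {D : Measure (X × ℝ)} {H h : X → ℝ} {B : ℝ}

theorem potential_zero [IsProbabilityMeasure D] : potential D 0 = 2 := by
  simp [potential, phi]

theorem integrable_phi'_mul [IsFiniteMeasure D] (hlab : ∀ᵐ p ∂D, p.2 = 1 ∨ p.2 = -1)
    (hH : Measurable H) (hh : Measurable h) (hB : ∀ x, |h x| ≤ B) :
    Integrable (fun p => phi' (p.2 * H p.1) * p.2 * h p.1) D := by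
  refine Integrable.mono' (integrable_const B) (Measurable.aestronglyMeasurable (by fun_prop)) ?_
  filter_upwards [hlab] with p hp
  have hy : |p.2| = 1 := by rcases hp with hp | hp <;> simp [hp]
  rw [Real.norm_eq_abs, abs_mul, abs_mul, hy, mul_one]
  exact (mul_le_of_le_one_left (abs_nonneg _) (abs_phi'_le_one _)).trans (hB p.1)

theorem ae_phi_mul_add_le (hlab : ∀ᵐ p ∂D, p.2 = 1 ∨ p.2 = -1) (hB : ∀ x, |h x| ≤ B) (η : ℝ) :
    ∀ᵐ p ∂D, phi (p.2 * (H p.1 + η * h p.1)) ≤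
      phi (p.2 * H p.1) + η * (phi' (p.2 * H p.1) * p.2 * h p.1) + η ^ 2 * B ^ 2 / 2 := by
  filter_upwards [hlab] with p hp
  exact phi_mul_add_le η hp (hB p.1)

theorem integrable_phi_mul_add [IsFiniteMeasure D] (hlab : ∀ᵐ p ∂D, p.2 = 1 ∨ p.2 = -1)
    (hH : Measurable H) (hh : Measurable h) (hB : ∀ x, |h x| ≤ B)
    (hint : Integrable (fun p : X × ℝ => phi (p.2 * H p.1)) D) (η : ℝ) :
    Integrable (fun p : X × ℝ => phi (p.2 * (H p.1 + η * h p.1))) D := by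
  refine Integrable.mono' ((hint.add ((integrable_phi'_mul hlab hH hh hB).const_mul η)).add
    (integrable_const (η ^ 2 * B ^ 2 / 2))) (Measurable.aestronglyMeasurable (by fun_prop)) ?_
  filter_upwards [ae_phi_mul_add_le hlab hB η] with p hp
  rwa [Real.norm_of_nonneg (phi_nonneg _)]

theorem potential_add_mul_le [IsProbabilityMeasure D] (hlab : ∀ᵐ p ∂D, p.2 = 1 ∨ p.2 = -1)
    (hH : Measurable H) (hh : Measurable h) (hB : ∀ x, |h x| ≤ B)
    (hint : Integrable (fun p : X × ℝ => phi (p.2 * H p.1)) D) (η : ℝ) :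
    potential D (fun x => H x + η * h x) ≤
      potential D H + η * potentialDeriv D H h + η ^ 2 * B ^ 2 / 2 := by
  have hint' := (integrable_phi'_mul hlab hH hh hB).const_mul η
  calc potential D (fun x => H x + η * h x)
      ≤ ∫ p, (phi (p.2 * H p.1) + η * (phi' (p.2 * H p.1) * p.2 * h p.1) +
          η ^ 2 * B ^ 2 / 2) ∂D :=
        integral_mono_of_nonneg (ae_of_all _ fun _ => phi_nonneg _)
          ((hint.add hint').add (integrable_const _)) (ae_phi_mul_add_le hlab hB η)
    _ = potential D H + η * potentialDeriv D H h + η ^ 2 * B ^ 2 / 2 := by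
      rw [integral_add _ (integrable_const _), integral_add hint hint', integral_const_mul]
      · simp [potential, potentialDeriv]
      · exact hint.add hint'

end Potential

theorem le_add_mul_sum_add_mul_of_forall_le {Φ G : ℕ → ℝ} {η c : ℝ} (T : ℕ)
    (hstep : ∀ t ∈ Finset.Icc 1 T, Φ (t + 1) ≤ Φ t + η * G t + c) :
    Φ (T + 1) ≤ Φ 1 + η * ∑ t ∈ Finset.Icc 1 T, G t + T * c := by
  induction T with
  | zero => simp
  | succ T ih =>
    have hT := hstep (T + 1) (Finset.mem_Icc.2 ⟨by omega, le_rfl⟩)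
    have ih := ih fun t ht => hstep t (Finset.Icc_subset_Icc_right T.le_succ ht)
    rw [Finset.sum_Icc_succ_top (by omega)]
    push_cast
    linarith

theorem measurable_and_integrable_phi_of_iterate {X : Type*} [MeasurableSpace X]
    {D : Measure (X × ℝ)} [IsFiniteMeasure D] (hlab : ∀ᵐ p ∂D, p.2 = 1 ∨ p.2 = -1)
    {B η : ℝ} {T : ℕ} {h H : ℕ → X → ℝ} (hhmeas : ∀ t, Measurable (h t))
    (hhbd : ∀ t x, |h t x| ≤ B) (hH1 : ∀ x, H 1 x = 0)
    (hrec : ∀ t ∈ Finset.Icc 1 T, ∀ x, H (t + 1) x = H t x + η * h t x) :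
    ∀ t ∈ Finset.Icc 1 (T + 1),
      Measurable (H t) ∧ Integrable (fun p : X × ℝ => phi (p.2 * H t p.1)) D := by
  intro t ht
  obtain ⟨ht1, htT⟩ := Finset.mem_Icc.1 ht
  induction t, ht1 using Nat.le_induction with
  | base =>
    simp only [show H 1 = 0 from funext hH1, Pi.zero_apply, mul_zero]
    exact ⟨measurable_const, integrable_const _⟩
  | succ t ht1 ih =>
    obtain ⟨hHm, hint⟩ := ih (Finset.mem_Icc.2 ⟨ht1, by omega⟩) (by omega)
    rw [show H (t + 1) = fun x => H t x + η * h t x from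
      funext (hrec t (Finset.mem_Icc.2 ⟨ht1, by omega⟩))]
    exact ⟨hHm.add ((hhmeas t).const_mul η),
      integrable_phi_mul_add hlab hHm (hhmeas t) (hhbd t) hint η⟩

theorem telescoped_descent_general {X : Type*} [MeasurableSpace X]
    (D : Measure (X × ℝ)) [IsProbabilityMeasure D]
    (hlab : ∀ᵐ p ∂D, p.2 = 1 ∨ p.2 = -1)
    (γ η : ℝ) (hη : 0 < η)
    (T : ℕ) (hT : 0 < T)
    (h : ℕ → X → ℝ) (hhmeas : ∀ t, Measurable (h t))
    (hhbd : ∀ t x, |h t x| ≤ 1 / γ)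
    (H : ℕ → X → ℝ)
    (hH1 : ∀ x, H 1 x = 0)
    (hrec : ∀ t ∈ Finset.Icc 1 T, ∀ x, H (t + 1) x = H t x + η * h t x) :
    -(1 / (T : ℝ)) *
        ∑ t ∈ Finset.Icc 1 T, ∫ p, phi' (p.2 * H t p.1) * p.2 * h t p.1 ∂D ≤
      2 / (η * T) + η / (2 * γ ^ 2) := by
  set c := η / (2 * γ ^ 2)
  have hstep : ∀ t ∈ Finset.Icc 1 T, potential D (H (t + 1)) ≤
      potential D (H t) + η * potentialDeriv D (H t) (h t) + η * c := by
    intro t ht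
    obtain ⟨hHm, hint⟩ := measurable_and_integrable_phi_of_iterate hlab hhmeas hhbd hH1 hrec t
      (Finset.Icc_subset_Icc_right T.le_succ ht)
    rw [show H (t + 1) = fun x => H t x + η * h t x from funext (hrec t ht)]
    exact (potential_add_mul_le hlab hHm (hhmeas t) (hhbd t) hint η).trans_eq (by ring)
  have htele := le_add_mul_sum_add_mul_of_forall_le (Φ := fun t => potential D (H t))
    (G := fun t => potentialDeriv D (H t) (h t)) T hstep
  rw [show H 1 = 0 from funext hH1, potential_zero] at htele
  have hlast := potential_nonneg D (H (T + 1))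
  have hηT : 0 < η * T := by positivity
  calc -(1 / (T : ℝ)) * ∑ t ∈ Finset.Icc 1 T, potentialDeriv D (H t) (h t)
      = -(η * ∑ t ∈ Finset.Icc 1 T, potentialDeriv D (H t) (h t)) / (η * T) := by
        field_simp
    _ ≤ (2 + T * (η * c)) / (η * T) := by gcongr; linarith
    _ = 2 / (η * T) + c := by field_simp

/-- Telescoping descent bound: with H_1 = 0 and H_{t+1} = H_t + η·h_t for t = 1,…,T,
−(1/T)·Σ_{t=1}^T Φ′_D(H_t, h_t) ≤ 2/(ηT) + η/(2γ²). -/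
theorem telescoped_descent {X : Type*} [MeasurableSpace X]
    (D : Measure (X × ℝ)) [IsProbabilityMeasure D]
    (hlab : ∀ᵐ p ∂D, p.2 = 1 ∨ p.2 = -1)
    (γ η : ℝ) (hγ0 : 0 < γ) (hγ1 : γ ≤ 1) (hη : 0 < η)
    (T : ℕ) (hT : 0 < T)
    (h : ℕ → X → ℝ) (hhmeas : ∀ t, Measurable (h t))
    (hhbd : ∀ t x, |h t x| ≤ 1 / γ)
    (H : ℕ → X → ℝ)
    (hH1 : ∀ x, H 1 x = 0)
    (hrec : ∀ t ∈ Finset.Icc 1 T, ∀ x, H (t + 1) x = H t x + η * h t x) :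
    -(1 / (T : ℝ)) *
        ∑ t ∈ Finset.Icc 1 T, ∫ p, phi' (p.2 * H t p.1) * p.2 * h t p.1 ∂D ≤
      2 / (η * T) + η / (2 * γ ^ 2) :=
  telescoped_descent_general D hlab γ η hη T hT h hhmeas hhbd H hH1 hrec
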